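/- arXiv:2506.16321 — 6 statements merged into one kernel-verified Lean document; each statement's English description precedes it below -/
import Mathlib

section
/- Let n ∈ ℕ, d ∈ ℕ₀ and let V := ℝ[x₁,…,xₙ]_{≤d}. Let C ⊆ V be a cone (0 ∈ C and λ·C ⊆ C for all λ > 0) with nonempty interior, let S ⊆ V, and let l : V → ℝ be a linear functional such that l(p) > 0 for every nonzero p ∈ C and for every nonzero p in the closure of the convex conic hull of S. Fix f in the interior of C and define the linear operator A : V → V by Ap := l(p)·f. Then there exists τ > 0 such that e^{tA}S ⊆ C for all t ≥ τ. -/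
open MvPolynomial Module

/-- Operator exponential `e^A` of an endomorphism of a finite-dimensional real vector
space, `e^A = ∑_{k≥0} A^k/k!`, realized through the matrix exponential in a basis. -/
noncomputable def endExp {M : Type*} [AddCommGroup M] [Module ℝ M] [FiniteDimensional ℝ M]
    (A : Module.End ℝ M) : Module.End ℝ M :=
  (Matrix.toLin (Module.finBasis ℝ M) (Module.finBasis ℝ M))
    (NormedSpace.exp ((LinearMap.toMatrix (Module.finBasis ℝ M) (Module.finBasis ℝ M)) A))

/-- The interior of a subset of a finite-dimensional real vector space with respect to its
standard (unique Hausdorff vector space) topology, transported through coordinates. -/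
noncomputable def interiorIn {M : Type*} [AddCommGroup M] [Module ℝ M] [FiniteDimensional ℝ M]
    (C : Set M) : Set M :=
  (Module.finBasis ℝ M).equivFun ⁻¹' interior ((Module.finBasis ℝ M).equivFun '' C)

/-- The closure of a subset of a finite-dimensional real vector space with respect to its
standard topology, transported through coordinates. -/
noncomputable def closureIn {M : Type*} [AddCommGroup M] [Module ℝ M] [FiniteDimensional ℝ M]
    (C : Set M) : Set M :=
  (Module.finBasis ℝ M).equivFun ⁻¹' closure ((Module.finBasis ℝ M).equivFun '' C)

/-- The convex conic hull of a set: all finite nonnegative combinations of its elements. -/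
def conicHull {M : Type*} [AddCommGroup M] [Module ℝ M] (S : Set M) : Set M :=
  {v | ∃ (m : ℕ) (c : Fin m → ℝ) (s : Fin m → M),
    (∀ i, 0 ≤ c i) ∧ (∀ i, s i ∈ S) ∧ v = ∑ i, c i • s i}

/-!
Since `A² = l(f) • A`, the exponential is `e^{tA} = 1 + c(t) • A` with
`c(t) = (e^{t l(f)} - 1) / l(f) → ∞`, so `e^{tA} p = p + c(t) l(p) • f`. Compactness of the unit
sphere gives `ε > 0` with `l(p) ≥ ε ‖p‖` on the conic hull of `S`, and some ball `B(f, δ)` lies in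
`C`. Once `c(t) ε δ > 1`, the point `f + p / (c(t) l(p))` lies in that ball, and scaling it by
`c(t) l(p)` keeps it in the cone `C`. (If `f = 0`, the cone `C` contains a ball around `0` and is
the whole space; otherwise `l(f) > 0`.)
-/

open Filter
open scoped Nat

theorem IsIdempotentElem.exp_smul {𝔸 : Type*} [Ring 𝔸] [Algebra ℝ 𝔸] [TopologicalSpace 𝔸]
    [IsTopologicalRing 𝔸] [ContinuousSMul ℝ 𝔸] [T2Space 𝔸] {P : 𝔸} (hP : IsIdempotentElem P)
    (μ : ℝ) : NormedSpace.exp (μ • P) = 1 + (Real.exp μ - 1) • P := by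
  have hterm : ∀ k : ℕ, ((k ! : ℝ)⁻¹) • (μ • P) ^ k
      = (μ ^ k / k !) • P + if k = 0 then 1 - P else 0 := by
    rintro (_ | k)
    · simp
    · simp [smul_pow, hP.pow_succ_eq, smul_smul, div_eq_inv_mul]
  have hexp : HasSum (fun k : ℕ => μ ^ k / k !) (Real.exp μ) := by
    rw [Real.exp_eq_exp_ℝ]
    exact NormedSpace.expSeries_div_hasSum_exp μ
  have hsum : HasSum (fun k : ℕ => ((k ! : ℝ)⁻¹) • (μ • P) ^ k) (1 + (Real.exp μ - 1) • P) := by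
    convert (hexp.smul_const P).add (hasSum_ite_eq 0 (1 - P)) using 1
    · exact funext hterm
    · rw [sub_smul, one_smul]
      abel
  rw [NormedSpace.exp_eq_tsum ℝ]
  exact hsum.tsum_eq

section ConicHull

variable {M : Type*} [AddCommGroup M] [Module ℝ M]

theorem subset_conicHull (S : Set M) : S ⊆ conicHull S :=
  fun p hp => ⟨1, fun _ => 1, fun _ => p, fun _ => zero_le_one, fun _ => hp, by simp⟩

theorem smul_mem_conicHull {S : Set M} {v : M} (hv : v ∈ conicHull S) {c : ℝ} (hc : 0 ≤ c) :
    c • v ∈ conicHull S := by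
  obtain ⟨m, a, s, ha, hs, rfl⟩ := hv
  exact ⟨m, fun i => c * a i, s, fun i => mul_nonneg hc (ha i), hs,
    by simp [Finset.smul_sum, smul_smul]⟩

end ConicHull

theorem exists_pos_mul_norm_le_of_pos_on_closure {E : Type*} [NormedAddCommGroup E]
    [NormedSpace ℝ E] [FiniteDimensional ℝ E] {K : Set E}
    (hK : ∀ c : ℝ, 0 < c → ∀ x ∈ K, c • x ∈ K) (g : E →ₗ[ℝ] ℝ)
    (hg : ∀ x ∈ closure K, x ≠ 0 → 0 < g x) : ∃ ε > 0, ∀ x ∈ K, ε * ‖x‖ ≤ g x := by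
  have hT : IsCompact (Metric.sphere (0 : E) 1 ∩ closure K) :=
    (isCompact_sphere 0 1).inter_right isClosed_closure
  obtain ⟨ε, hε, hεT⟩ := hT.exists_forall_le' g.continuous_of_finiteDimensional.continuousOn
    fun y hy => hg y hy.2 (ne_zero_of_mem_sphere one_ne_zero ⟨y, hy.1⟩)
  refine ⟨ε, hε, fun x hx => ?_⟩
  rcases eq_or_ne x 0 with rfl | hx0
  · simp
  have hn : 0 < ‖x‖ := norm_pos_iff.2 hx0
  have hεx := hεT (‖x‖⁻¹ • x)
    ⟨by simp [norm_smul, hn.ne'], subset_closure (hK _ (inv_pos.2 hn) x hx)⟩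
  rwa [map_smul, smul_eq_mul, le_inv_mul_iff₀ hn, mul_comm] at hεx

theorem tendsto_exp_mul_sub_one_div_atTop {a : ℝ} (ha : 0 < a) :
    Tendsto (fun t => (Real.exp (t * a) - 1) / a) atTop atTop :=
  (tendsto_atTop_add_const_right _ (-1)
    (Real.tendsto_exp_atTop.comp (tendsto_id.atTop_mul_const ha))).atTop_div_const ha

section FiniteDimensional

variable {M : Type*} [AddCommGroup M] [Module ℝ M] [FiniteDimensional ℝ M]

theorem endExp_smul_of_mul_self_eq_smul {A : Module.End ℝ M} {a : ℝ} (ha : a ≠ 0)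
    (hA : A * A = a • A) (t : ℝ) :
    endExp (t • A) = 1 + ((Real.exp (t * a) - 1) / a) • A := by
  set B := Module.finBasis ℝ M
  have hP : IsIdempotentElem (LinearMap.toMatrix B B (a⁻¹ • A)) := by
    rw [IsIdempotentElem, ← LinearMap.toMatrix_mul, smul_mul_smul_comm, hA, smul_smul,
      mul_assoc, inv_mul_cancel₀ ha, mul_one]
  have htA : t • A = (t * a) • (a⁻¹ • A) := by
    rw [smul_smul, mul_assoc, mul_inv_cancel₀ ha, mul_one]
  rw [endExp, htA, map_smul, hP.exp_smul, map_add, map_smul, Matrix.toLin_one,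
    Matrix.toLin_toMatrix, smul_smul, div_eq_mul_inv, Module.End.one_eq_id]

theorem endExp_smul_apply_of_forall_eq_smul {l : M →ₗ[ℝ] ℝ} {f : M} (hlf : l f ≠ 0)
    {A : Module.End ℝ M} (hA : ∀ p, A p = l p • f) (t : ℝ) (p : M) :
    endExp (t • A) p = p + ((Real.exp (t * l f) - 1) / l f * l p) • f := by
  have hA2 : A * A = l f • A := by
    ext q
    simp [hA, smul_smul, mul_comm]
  simp [endExp_smul_of_mul_self_eq_smul hlf hA2, hA, smul_smul]

variable (M) in
noncomputable abbrev coords : M ≃ₗ[ℝ] (Fin (Module.finrank ℝ M) → ℝ) :=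
  (Module.finBasis ℝ M).equivFun

theorem exists_ball_subset_of_mem_interiorIn {C : Set M} {f : M} (hf : f ∈ interiorIn C) :
    ∃ δ > 0, ∀ q, ‖coords M q - coords M f‖ < δ → q ∈ C := by
  obtain ⟨δ, hδ, hball⟩ := Metric.mem_nhds_iff.mp (mem_interior_iff_mem_nhds.mp hf)
  refine ⟨δ, hδ, fun q hq => ?_⟩
  obtain ⟨q', hq', hqq'⟩ := hball (mem_ball_iff_norm.mpr hq)
  rwa [← (coords M).injective hqq']

theorem add_smul_mem_of_norm_coords_lt {C : Set M} (hC : ∀ c : ℝ, 0 < c → ∀ p ∈ C, c • p ∈ C)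
    {f : M} {δ : ℝ} (hball : ∀ q, ‖coords M q - coords M f‖ < δ → q ∈ C) {p : M} {r : ℝ}
    (hr : 0 < r) (hp : ‖coords M p‖ < r * δ) : p + r • f ∈ C := by
  have hq : f + r⁻¹ • p ∈ C := by
    refine hball _ ?_
    rwa [map_add, map_smul, add_sub_cancel_left, norm_smul, Real.norm_of_nonneg (by positivity),
      inv_mul_lt_iff₀ hr]
  simpa [smul_add, smul_smul, hr.ne', add_comm] using hC r hr _ hq

theorem eq_univ_of_zero_mem_interiorIn {C : Set M} (hC : ∀ c : ℝ, 0 < c → ∀ p ∈ C, c • p ∈ C)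
    (h0 : 0 ∈ interiorIn C) : C = Set.univ := by
  obtain ⟨δ, hδ, hball⟩ := exists_ball_subset_of_mem_interiorIn h0
  refine Set.eq_univ_of_forall fun p => ?_
  have hr : 0 < (‖coords M p‖ + 1) / δ := by positivity
  have hp : ‖coords M p‖ < (‖coords M p‖ + 1) / δ * δ := by
    rw [div_mul_cancel₀ _ hδ.ne']
    linarith
  simpa using add_smul_mem_of_norm_coords_lt hC hball hr hp

theorem exists_pos_mul_norm_coords_le {S : Set M} {l : M →ₗ[ℝ] ℝ}
    (hl : ∀ p ∈ closureIn (conicHull S), p ≠ 0 → 0 < l p) :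
    ∃ ε > 0, ∀ p ∈ S, ε * ‖coords M p‖ ≤ l p := by
  obtain ⟨ε, hε, h⟩ := exists_pos_mul_norm_le_of_pos_on_closure (K := coords M '' conicHull S)
    (by rintro c hc _ ⟨v, hv, rfl⟩; exact ⟨c • v, smul_mem_conicHull hv hc.le, map_smul _ _ _⟩)
    (l ∘ₗ (coords M).symm.toLinearMap)
    fun x hx hx0 => hl _
      (by rwa [closureIn, Set.mem_preimage, LinearEquiv.coe_coe, LinearEquiv.apply_symm_apply])
      ((LinearEquiv.map_ne_zero_iff _).2 hx0)
  exact ⟨ε, hε, fun p hp => by simpa using h _ ⟨p, subset_conicHull S hp, rfl⟩⟩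

end FiniteDimensional

theorem stmt_0_general (n : ℕ) (d : ℕ)
    (C S : Set (restrictTotalDegree (Fin n) ℝ d))
    (hC0 : (0 : restrictTotalDegree (Fin n) ℝ d) ∈ C)
    (hCcone : ∀ lam : ℝ, 0 < lam → ∀ p ∈ C, lam • p ∈ C)
    (l : restrictTotalDegree (Fin n) ℝ d →ₗ[ℝ] ℝ)
    (hlC : ∀ p ∈ C, p ≠ 0 → 0 < l p)
    (hlS : ∀ p ∈ closureIn (conicHull S), p ≠ 0 → 0 < l p)
    (f : restrictTotalDegree (Fin n) ℝ d) (hf : f ∈ interiorIn C)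
    (A : Module.End ℝ (restrictTotalDegree (Fin n) ℝ d))
    (hA : ∀ p, A p = l p • f) :
    ∃ τ : ℝ, 0 < τ ∧ ∀ t : ℝ, τ ≤ t → ∀ p ∈ S, endExp (t • A) p ∈ C := by
  obtain ⟨δ, hδ, hball⟩ := exists_ball_subset_of_mem_interiorIn hf
  rcases eq_or_ne f 0 with rfl | hf0
  · rw [eq_univ_of_zero_mem_interiorIn hCcone hf]
    exact ⟨1, one_pos, fun _ _ _ _ => Set.mem_univ _⟩
  have hlf : 0 < l f := hlC f (hball f (by simpa using hδ)) hf0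
  obtain ⟨ε, hε, hεS⟩ := exists_pos_mul_norm_coords_le hlS
  obtain ⟨τ, hτ⟩ := eventually_atTop.1
    ((tendsto_exp_mul_sub_one_div_atTop hlf).eventually_gt_atTop (ε * δ)⁻¹)
  refine ⟨max τ 1, by positivity, fun t ht p hp => ?_⟩
  rw [endExp_smul_apply_of_forall_eq_smul hlf.ne' hA]
  set c := (Real.exp (t * l f) - 1) / l f
  rcases eq_or_ne p 0 with rfl | hp0
  · simpa using hC0
  have hc : 1 < c * (ε * δ) := by
    rw [← inv_lt_iff_one_lt_mul₀ (by positivity)]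
    exact hτ t (le_of_max_le_left ht)
  have hc0 : 0 < c := pos_of_mul_pos_left (one_pos.trans hc) (by positivity)
  have hx : 0 < ‖coords _ p‖ := norm_pos_iff.2 ((LinearEquiv.map_ne_zero_iff _).2 hp0)
  have hlp : ε * ‖coords _ p‖ ≤ l p := hεS p hp
  apply add_smul_mem_of_norm_coords_lt hCcone hball (mul_pos hc0 ((mul_pos hε hx).trans_le hlp))
  calc ‖coords _ p‖ < c * (ε * δ) * ‖coords _ p‖ := lt_mul_of_one_lt_left hx hc
    _ = c * δ * (ε * ‖coords _ p‖) := by ring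
    _ ≤ c * δ * l p := by gcongr
    _ = c * l p * δ := by ring

theorem stmt_0 (n : ℕ) (hn : 0 < n) (d : ℕ)
    (C S : Set (restrictTotalDegree (Fin n) ℝ d))
    (hC0 : (0 : restrictTotalDegree (Fin n) ℝ d) ∈ C)
    (hCcone : ∀ lam : ℝ, 0 < lam → ∀ p ∈ C, lam • p ∈ C)
    (hCint : (interiorIn C).Nonempty)
    (l : restrictTotalDegree (Fin n) ℝ d →ₗ[ℝ] ℝ)
    (hlC : ∀ p ∈ C, p ≠ 0 → 0 < l p)
    (hlS : ∀ p ∈ closureIn (conicHull S), p ≠ 0 → 0 < l p)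
    (f : restrictTotalDegree (Fin n) ℝ d) (hf : f ∈ interiorIn C)
    (A : Module.End ℝ (restrictTotalDegree (Fin n) ℝ d))
    (hA : ∀ p, A p = l p • f) :
    ∃ τ : ℝ, 0 < τ ∧ ∀ t : ℝ, τ ≤ t → ∀ p ∈ S, endExp (t • A) p ∈ C :=
  stmt_0_general n d C S hC0 hCcone l hlC hlS f hf A hA
end

section
/- Let n ∈ ℕ and let K ⊆ ℝⁿ be compact. Then there exists no bijective linear operator T : ℝ[x₁,…,xₙ] → ℝ[x₁,…,xₙ] such that T(Pos(K)) ⊆ Σℝ[x₁,…,xₙ]². -/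
/-!
If `T` were such an operator, pick `k` larger than the degree of `T 1` along the first coordinate
axis and let `f := T⁻¹ (-X₀ ^ k)`. Since `K` is compact, `f + c ≥ 0` on `K` for some constant `c`,
so `T (f + c) = c • T 1 - X₀ ^ k` is a sum of squares, hence nonnegative on all of `ℝⁿ`.
Along the first axis, however, `X₀ ^ k` outgrows `c • T 1`.
-/

open MvPolynomial

/-- `Pos n K`: polynomials in `n` variables that are nonnegative on `K ⊆ ℝⁿ`. -/
def Pos (n : ℕ) (K : Set (Fin n → ℝ)) : Set (MvPolynomial (Fin n) ℝ) :=
  {p | ∀ x ∈ K, 0 ≤ eval x p}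

/-- `SOS n`: finite sums of squares of polynomials in `n` variables. -/
def SOS (n : ℕ) : Set (MvPolynomial (Fin n) ℝ) :=
  {p | ∃ (m : ℕ) (q : Fin m → MvPolynomial (Fin n) ℝ), p = ∑ i, q i ^ 2}

theorem eval_nonneg_of_mem_SOS {n : ℕ} {p : MvPolynomial (Fin n) ℝ} (hp : p ∈ SOS n)
    (x : Fin n → ℝ) : 0 ≤ eval x p := by
  obtain ⟨m, q, rfl⟩ := hp
  simp only [map_sum, map_pow]
  positivity

theorem exists_C_add_mem_Pos {n : ℕ} {K : Set (Fin n → ℝ)} (hK : IsCompact K)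
    (f : MvPolynomial (Fin n) ℝ) : ∃ c : ℝ, C c + f ∈ Pos n K := by
  obtain ⟨c, hc⟩ := hK.exists_bound_of_continuousOn (continuous_eval f).continuousOn
  refine ⟨c, fun x hx => ?_⟩
  have hf : -c ≤ eval x f := neg_le_of_abs_le (hc x hx)
  simp only [map_add, eval_C]
  linarith

theorem Polynomial.exists_eval_lt_pow {q : Polynomial ℝ} {k : ℕ} (hk : q.natDegree < k) :
    ∃ t : ℝ, q.eval t < t ^ k := by
  have hdeg : q.degree < (X ^ k : Polynomial ℝ).degree := by
    rw [degree_X_pow]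
    exact degree_le_natDegree.trans_lt (by exact_mod_cast hk)
  have htends : Filter.Tendsto (fun t => (X ^ k - q).eval t) Filter.atTop Filter.atTop := by
    apply tendsto_atTop_of_leadingCoeff_nonneg
    · rw [degree_sub_eq_left_of_degree_lt hdeg, degree_X_pow]
      exact_mod_cast (Nat.zero_le _).trans_lt hk
    · simp [leadingCoeff_sub_of_degree_lt hdeg]
  obtain ⟨t, ht⟩ := (htends.eventually (Filter.eventually_gt_atTop 0)).exists
  exact ⟨t, by simpa using ht⟩

theorem MvPolynomial.eval_aeval_piSingle_X {σ R : Type*} [CommRing R] [DecidableEq σ] (i : σ)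
    (u : MvPolynomial σ R) (t : R) :
    (aeval (Pi.single i Polynomial.X) u).eval t = eval (Pi.single i t) u := by
  induction u using MvPolynomial.induction_on with
  | C a => simp
  | add p q hp hq => simp [hp, hq]
  | mul_X p j hp =>
    obtain rfl | hj := eq_or_ne j i
    · simp [hp]
    · simp [hj]

theorem MvPolynomial.exists_pow_forall_exists_mul_eval_lt {σ : Type*} (u : MvPolynomial σ ℝ)
    (i : σ) : ∃ k : ℕ, ∀ c : ℝ, ∃ x : σ → ℝ, c * eval x u < x i ^ k := by
  classical
  set q : Polynomial ℝ := aeval (Pi.single i Polynomial.X) u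
  refine ⟨q.natDegree + 1, fun c => ?_⟩
  obtain ⟨t, ht⟩ := Polynomial.exists_eval_lt_pow
    ((Polynomial.natDegree_smul_le c q).trans_lt q.natDegree.lt_succ_self)
  refine ⟨Pi.single i t, ?_⟩
  simpa [q, eval_aeval_piSingle_X] using ht

theorem stmt_7 (n : ℕ) (hn : 0 < n) (K : Set (Fin n → ℝ)) (hK : IsCompact K) :
    ¬ ∃ T : MvPolynomial (Fin n) ℝ →ₗ[ℝ] MvPolynomial (Fin n) ℝ,
        Function.Bijective T ∧ T '' Pos n K ⊆ SOS n := by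
  rintro ⟨T, hT, hPos⟩
  set i : Fin n := ⟨0, hn⟩
  obtain ⟨k, hk⟩ := exists_pow_forall_exists_mul_eval_lt (T 1) i
  obtain ⟨f, hf⟩ := hT.surjective (-X i ^ k)
  obtain ⟨c, hc⟩ := exists_C_add_mem_Pos hK f
  obtain ⟨x, hx⟩ := hk c
  have hnonneg := eval_nonneg_of_mem_SOS (hPos ⟨_, hc, rfl⟩) x
  rw [map_add, hf, ← mul_one (C c), ← smul_eq_C_mul, map_smul] at hnonneg
  simp only [map_add, smul_eval, map_neg, map_pow, eval_X] at hnonneg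
  linarith
end

section
/- Let n ∈ ℕ and let A : ℝ[x₁,…,xₙ] → ℝ[x₁,…,xₙ] be a linear operator. The following are equivalent: (a) for every multi-index α ∈ ℕ₀ⁿ one has sup_{k∈ℕ₀} totalDegree(Aᵏ x^α) < ∞, i.e., there exists D ∈ ℕ₀ with totalDegree(Aᵏ x^α) ≤ D for all k ∈ ℕ₀; (b) there exists a sequence (V_i)_{i∈ℕ₀} of subspaces of ℝ[x₁,…,xₙ] such that each V_i is finite-dimensional, ⋃_{i∈ℕ₀} V_i = ℝ[x₁,…,xₙ], and A V_i ⊆ V_i for all i ∈ ℕ₀. -/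
/-!
If the orbits of all monomials have bounded degree, the `A`-orbit of the finitely many monomials
of total degree at most `i` spans an `A`-invariant subspace of bounded degree, hence of finite
dimension; these subspaces exhaust the polynomial ring. Conversely, a monomial lying in a
finite-dimensional `A`-invariant subspace has its whole orbit there, and a finite-dimensional
space of polynomials has bounded degree.
-/

open MvPolynomial

namespace Module.End

variable {R M : Type*} [Semiring R] [AddCommMonoid M] [Module R M]

def orbitSpan (A : Module.End R M) (S : Set M) : Submodule R M :=
  Submodule.span R (⋃ k : ℕ, (A ^ k) '' S)

lemma subset_orbitSpan (A : Module.End R M) (S : Set M) : S ⊆ A.orbitSpan S := fun s hs =>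
  Submodule.subset_span (Set.mem_iUnion.mpr ⟨0, s, hs, by simp⟩)

lemma orbitSpan_mem_invtSubmodule (A : Module.End R M) (S : Set M) :
    A.orbitSpan S ∈ A.invtSubmodule := by
  rw [mem_invtSubmodule, orbitSpan, Submodule.span_le]
  rintro _ ⟨_, ⟨k, rfl⟩, s, hs, rfl⟩
  refine Submodule.subset_span (Set.mem_iUnion.mpr ⟨k + 1, s, hs, ?_⟩)
  rw [pow_succ', mul_apply]

lemma pow_apply_mem_of_mem_invtSubmodule {A : Module.End R M} {p : Submodule R M}
    (hp : p ∈ A.invtSubmodule) (k : ℕ) {x : M} (hx : x ∈ p) : (A ^ k) x ∈ p := by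
  rw [coe_pow]
  exact ((mem_invtSubmodule_iff_mapsTo A).mp hp).iterate k hx

end Module.End

namespace MvPolynomial

variable {σ R : Type*} [CommSemiring R]

lemma restrictTotalDegree_eq_span (m : ℕ) :
    restrictTotalDegree σ R m = Submodule.span R ((monomial · 1) '' {α | α.degree ≤ m}) :=
  restrictSupport_eq_span R _

lemma exists_le_restrictTotalDegree_of_fg {V : Submodule R (MvPolynomial σ R)} (hV : V.FG) :
    ∃ D, V ≤ restrictTotalDegree σ R D := by
  obtain ⟨s, rfl⟩ := hV
  refine ⟨s.sup totalDegree, Submodule.span_le.mpr fun p hp => ?_⟩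
  exact (mem_restrictTotalDegree _ _ _).mpr (Finset.le_sup hp)

lemma exists_orbitSpan_le_restrictTotalDegree (A : Module.End R (MvPolynomial σ R))
    {S : Set (MvPolynomial σ R)} (hS : S.Finite)
    (hbdd : ∀ p ∈ S, ∃ D, ∀ k : ℕ, ((A ^ k) p).totalDegree ≤ D) :
    ∃ D, A.orbitSpan S ≤ restrictTotalDegree σ R D := by
  choose! D hD using hbdd
  refine ⟨hS.toFinset.sup D, Submodule.span_le.mpr ?_⟩
  rintro _ ⟨_, ⟨k, rfl⟩, p, hp, rfl⟩
  exact (mem_restrictTotalDegree _ _ _).mpr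
    ((hD p hp k).trans (Finset.le_sup (hS.mem_toFinset.mpr hp)))

end MvPolynomial

theorem stmt_8_general (n : ℕ)
    (A : Module.End ℝ (MvPolynomial (Fin n) ℝ)) :
    (∀ α : Fin n →₀ ℕ, ∃ D : ℕ, ∀ k : ℕ,
        ((A ^ k) (monomial α (1 : ℝ))).totalDegree ≤ D) ↔
    (∃ V : ℕ → Submodule ℝ (MvPolynomial (Fin n) ℝ),
        (∀ i, FiniteDimensional ℝ (V i)) ∧
        (⋃ i, (V i : Set (MvPolynomial (Fin n) ℝ))) = Set.univ ∧
        (∀ i, ∀ p ∈ V i, A p ∈ V i)) := by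
  constructor
  · intro hbdd
    let monomialsUpTo (i : ℕ) := (monomial · (1 : ℝ)) '' {α : Fin n →₀ ℕ | α.degree ≤ i}
    refine ⟨fun i => A.orbitSpan (monomialsUpTo i), fun i => ?_, ?_,
      fun i => A.orbitSpan_mem_invtSubmodule _⟩
    · obtain ⟨D, hD⟩ := exists_orbitSpan_le_restrictTotalDegree A
        ((Finsupp.finite_of_degree_le i).image _) (by rintro _ ⟨α, -, rfl⟩; exact hbdd α)
      exact Submodule.finiteDimensional_of_le hD
    · refine Set.eq_univ_of_forall fun p => Set.mem_iUnion.mpr ⟨p.totalDegree, ?_⟩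
      have hp : p ∈ restrictTotalDegree (Fin n) ℝ p.totalDegree :=
        (mem_restrictTotalDegree _ _ _).mpr le_rfl
      rw [restrictTotalDegree_eq_span] at hp
      exact Submodule.span_le.mpr (A.subset_orbitSpan _) hp
  · rintro ⟨V, hfin, hcover, hinv⟩ α
    obtain ⟨i, hi⟩ := Set.mem_iUnion.mp (hcover ▸ Set.mem_univ (monomial α (1 : ℝ)))
    obtain ⟨D, hD⟩ := exists_le_restrictTotalDegree_of_fg (Module.Finite.iff_fg.mp (hfin i))
    exact ⟨D, fun k => (mem_restrictTotalDegree _ _ _).mp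
      (hD (Module.End.pow_apply_mem_of_mem_invtSubmodule (hinv i) k hi))⟩

theorem stmt_8 (n : ℕ) (hn : 0 < n)
    (A : Module.End ℝ (MvPolynomial (Fin n) ℝ)) :
    (∀ α : Fin n →₀ ℕ, ∃ D : ℕ, ∀ k : ℕ,
        ((A ^ k) (monomial α (1 : ℝ))).totalDegree ≤ D) ↔
    (∃ V : ℕ → Submodule ℝ (MvPolynomial (Fin n) ℝ),
        (∀ i, FiniteDimensional ℝ (V i)) ∧
        (⋃ i, (V i : Set (MvPolynomial (Fin n) ℝ))) = Set.univ ∧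
        (∀ i, ∀ p ∈ V i, A p ∈ V i)) :=
  stmt_8_general n A
end

section
/- Let n ∈ ℕ, let K ⊆ ℝⁿ be compact, and let T : ℝ[x₁,…,xₙ] → ℝ[x₁,…,xₙ] be a bijective linear operator. Then there exist p ∈ Pos(K) and a constant c > 0 such that c − p ∈ Pos(K) and totalDegree(Tp) > totalDegree(T(1)). -/
/-!
Polynomials of total degree at most `d` form a finite-dimensional space, while `ℝ[x₁,…,xₙ]` is
infinite-dimensional for `n > 0`; so the injective map `T` cannot take all its values in degree
at most `deg (T 1)`, and some `q` has `deg (T q) > deg (T 1)`. Being continuous, `q` is bounded on the compact set `K`, so adding a large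
constant `a` makes `p = q + a` lie between `0` and some constant `c` on `K`. Since
`T p = T q + a • T 1`, the degree of `T p` is still that of `T q`.
-/

open MvPolynomial

namespace MvPolynomial

theorem not_finite {σ R : Type*} [CommSemiring R] [Nontrivial R] [Nonempty σ] :
    ¬ Module.Finite R (MvPolynomial σ R) := fun _ ↦
  have := Module.Finite.finite_basis (basisMonomials σ R)
  _root_.not_finite (σ →₀ ℕ)

theorem exists_lt_totalDegree_of_injective {σ R : Type*} [CommRing R] [IsNoetherianRing R]
    [Nontrivial R] [Finite σ] [Nonempty σ]
    {T : MvPolynomial σ R →ₗ[R] MvPolynomial σ R} (hT : Function.Injective T) (d : ℕ) :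
    ∃ q, d < (T q).totalDegree := by
  by_contra! hle
  have hmem (q : MvPolynomial σ R) : T q ∈ restrictTotalDegree σ R d :=
    (mem_restrictTotalDegree _ _ _).mpr (hle q)
  have hinj : Function.Injective (T.codRestrict _ hmem) := fun _ _ h ↦
    hT (congrArg Subtype.val h)
  exact not_finite (Module.Finite.of_injective _ hinj)

theorem totalDegree_map_add_C_of_lt {σ R : Type*} [CommSemiring R]
    (T : MvPolynomial σ R →ₗ[R] MvPolynomial σ R) {q : MvPolynomial σ R}
    (h : (T 1).totalDegree < (T q).totalDegree) (a : R) :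
    (T (q + C a)).totalDegree = (T q).totalDegree := by
  rw [← mul_one (C a), ← smul_eq_C_mul, map_add, map_smul]
  exact totalDegree_add_eq_left_of_totalDegree_lt ((totalDegree_smul_le a _).trans_lt h)

end MvPolynomial

theorem exists_add_C_mem_Pos_and_C_sub_mem_Pos {n : ℕ} {K : Set (Fin n → ℝ)} (hK : IsCompact K)
    (q : MvPolynomial (Fin n) ℝ) :
    ∃ a c : ℝ, 0 < c ∧ q + C a ∈ Pos n K ∧ C c - (q + C a) ∈ Pos n K := by
  obtain ⟨B, hB⟩ := hK.exists_bound_of_continuousOn (continuous_eval q).continuousOn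
  refine ⟨|B| + 1, 2 * |B| + 1, by positivity, fun x hx ↦ ?_, fun x hx ↦ ?_⟩ <;>
  · have := abs_le.mp ((hB x hx).trans (le_abs_self B))
    simp only [map_add, map_sub, eval_C]
    linarith

theorem stmt_14 (n : ℕ) (hn : 0 < n) (K : Set (Fin n → ℝ)) (hK : IsCompact K)
    (T : MvPolynomial (Fin n) ℝ →ₗ[ℝ] MvPolynomial (Fin n) ℝ)
    (hT : Function.Bijective T) :
    ∃ (p : MvPolynomial (Fin n) ℝ) (c : ℝ), 0 < c ∧ p ∈ Pos n K ∧
      C c - p ∈ Pos n K ∧ (T 1).totalDegree < (T p).totalDegree := by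
  have : Nonempty (Fin n) := ⟨⟨0, hn⟩⟩
  obtain ⟨q, hq⟩ := exists_lt_totalDegree_of_injective hT.injective (T 1).totalDegree
  obtain ⟨a, c, hc, hpos, hle⟩ := exists_add_C_mem_Pos_and_C_sub_mem_Pos hK q
  exact ⟨q + C a, c, hc, hpos, hle, (totalDegree_map_add_C_of_lt T hq a).symm ▸ hq⟩
end

section
/- Let n ∈ ℕ and let p ∈ ℝ[x₁,…,xₙ] satisfy p(x) ≥ 0 for all x ∈ ℝⁿ. Then the homogeneous component of p of degree totalDegree(p) is also nonnegative on all of ℝⁿ. -/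
/-!
Restricting `p` to the line `t ↦ t • x` gives a univariate polynomial whose `k`-th coefficient is
the value at `x` of the degree-`k` homogeneous component of `p`, so its coefficient of degree
`totalDegree p` is the value at `x` of the top component. That polynomial is nonnegative on `ℝ`,
and a real polynomial that is eventually nonnegative has a nonnegative leading coefficient,
since otherwise it tends to `-∞`.
-/

open MvPolynomial Filter
open scoped Polynomial

namespace MvPolynomial

variable {σ R : Type*} [CommSemiring R]

theorem IsHomogeneous.eval_smul {q : MvPolynomial σ R} {d : ℕ} (hq : q.IsHomogeneous d)
    (t : R) (x : σ → R) : eval (t • x) q = t ^ d * eval x q := by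
  simp only [eval_eq, Finset.mul_sum]
  refine Finset.sum_congr rfl fun m hm => ?_
  have hdeg : ∑ i ∈ m.support, m i = d := by
    rw [← Finsupp.degree_apply, Finsupp.degree_eq_weight_one]
    exact hq (mem_support_iff.mp hm)
  simp only [Pi.smul_apply, smul_eq_mul, mul_pow, Finset.prod_mul_distrib,
    Finset.prod_pow_eq_pow_sum, hdeg]
  ring

noncomputable def lineRestriction (p : MvPolynomial σ R) (x : σ → R) : R[X] :=
  ∑ i ∈ Finset.range (p.totalDegree + 1),
    Polynomial.C (eval x (homogeneousComponent i p)) * Polynomial.X ^ i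

theorem eval_lineRestriction (p : MvPolynomial σ R) (x : σ → R) (t : R) :
    (lineRestriction p x).eval t = eval (t • x) p := by
  conv_rhs => rw [← sum_homogeneousComponent p]
  simp only [lineRestriction, map_sum, Polynomial.eval_finsetSum, Polynomial.eval_mul,
    Polynomial.eval_C, Polynomial.eval_pow, Polynomial.eval_X,
    (homogeneousComponent_isHomogeneous _ p).eval_smul, mul_comm]

theorem coeff_lineRestriction (p : MvPolynomial σ R) (x : σ → R) (k : ℕ) :
    (lineRestriction p x).coeff k = eval x (homogeneousComponent k p) := by
  simp only [lineRestriction, Polynomial.finsetSum_coeff, Polynomial.coeff_C_mul_X_pow,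
    Finset.sum_ite_eq, Finset.mem_range]
  split_ifs with hk
  · rfl
  · rw [homogeneousComponent_eq_zero k p (by omega), map_zero]

theorem natDegree_lineRestriction_le (p : MvPolynomial σ R) (x : σ → R) :
    (lineRestriction p x).natDegree ≤ p.totalDegree := by
  refine Polynomial.natDegree_le_iff_coeff_eq_zero.mpr fun k hk => ?_
  rw [coeff_lineRestriction, homogeneousComponent_eq_zero k p (by exact_mod_cast hk), map_zero]

end MvPolynomial

namespace Polynomial

variable {𝕜 : Type*} [NormedField 𝕜] [LinearOrder 𝕜] [IsStrictOrderedRing 𝕜] [OrderTopology 𝕜]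

theorem leadingCoeff_nonneg_of_eventually_nonneg {q : 𝕜[X]}
    (hq : ∀ᶠ t in atTop, 0 ≤ q.eval t) : 0 ≤ q.leadingCoeff := by
  by_contra! hneg
  rcases le_or_gt q.degree 0 with hdeg | hdeg
  · obtain ⟨t, ht⟩ := hq.exists
    rw [eq_C_of_degree_le_zero hdeg, eval_C] at ht
    rw [leadingCoeff, natDegree_eq_zero_iff_degree_le_zero.mpr hdeg] at hneg
    exact ht.not_gt hneg
  · obtain ⟨t, ht, hlt⟩ :=
      (hq.and ((tendsto_atBot_of_leadingCoeff_nonpos q hdeg hneg.le).eventually_lt_atBot 0)).exists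
    exact ht.not_gt hlt

theorem coeff_nonneg_of_natDegree_le {q : 𝕜[X]} {d : ℕ} (hd : q.natDegree ≤ d)
    (hq : ∀ᶠ t in atTop, 0 ≤ q.eval t) : 0 ≤ q.coeff d := by
  rcases hd.lt_or_eq with hlt | rfl
  · rw [coeff_eq_zero_of_natDegree_lt hlt]
  · exact leadingCoeff_nonneg_of_eventually_nonneg hq

end Polynomial

theorem stmt_15_general (n : ℕ) (p : MvPolynomial (Fin n) ℝ)
    (hp : ∀ x : Fin n → ℝ, 0 ≤ eval x p) :
    ∀ x : Fin n → ℝ, 0 ≤ eval x (homogeneousComponent p.totalDegree p) := by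
  intro x
  rw [← coeff_lineRestriction]
  refine Polynomial.coeff_nonneg_of_natDegree_le (natDegree_lineRestriction_le p x) ?_
  exact Eventually.of_forall fun t => (eval_lineRestriction p x t).symm ▸ hp (t • x)

theorem stmt_15 (n : ℕ) (hn : 0 < n) (p : MvPolynomial (Fin n) ℝ)
    (hp : ∀ x : Fin n → ℝ, 0 ≤ eval x p) :
    ∀ x : Fin n → ℝ, 0 ≤ eval x (homogeneousComponent p.totalDegree p) :=
  stmt_15_general n p hp
end

section
/- Define linear operators A, B : ℝ[x] → ℝ[x] on the monomial basis by A x^k := x^k for even k and A x^k := x^{k+1} for odd k, and B x^k := x^{k+1} for even k and B x^k := x^k for odd k, and set C := A∘B − B∘A. Then C x^{2m} = x^{2m+2} − x^{2m+1} and C x^{2m+1} = x^{2m+2} − x^{2m+3} for all m ∈ ℕ₀, and for every k ≥ 1 the polynomial Cᵏ(1) has degree exactly 2k; in particular there is no D ∈ ℕ₀ with deg(Cᵏ(1)) ≤ D for all k ∈ ℕ₀. -/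
/-!
The commutator `C` raises degrees by at most two, and sends the even monomial `X ^ (2k)` to
`X ^ (2k+2)` plus terms of lower degree. Hence, inductively, `Cᵏ 1 = X ^ (2k) + (lower terms)`.
-/

open Polynomial

namespace Polynomial

variable {R : Type*} [CommRing R]

theorem apply_mem_degreeLT_of_degree_apply_X_pow_le (L : Module.End R R[X]) {d : ℕ}
    (hL : ∀ i : ℕ, (L (X ^ i)).degree ≤ (i + d : ℕ)) {n : ℕ} {q : R[X]}
    (hq : q ∈ degreeLT R n) : L q ∈ degreeLT R (n + d) := by
  classical
  rw [degreeLT_eq_span_X_pow] at hq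
  refine (Submodule.span_le (p := (degreeLT R (n + d)).comap L)).mpr ?_ hq
  rw [Finset.coe_image, Set.image_subset_iff]
  intro i hi
  exact mem_degreeLT.mpr ((hL i).trans_lt (by
    exact_mod_cast Nat.add_lt_add_right (Finset.mem_range.mp hi) d))

theorem pow_apply_one_sub_X_pow_mem_degreeLT (L : Module.End R R[X]) {d : ℕ}
    (hL : ∀ i : ℕ, (L (X ^ i)).degree ≤ (i + d : ℕ))
    (hlead : ∀ m : ℕ, L (X ^ (d * m)) - X ^ (d * m + d) ∈ degreeLT R (d * m + d)) (k : ℕ) :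
    (L ^ k) 1 - X ^ (d * k) ∈ degreeLT R (d * k) := by
  induction k with
  | zero => simp
  | succ k ih =>
    have hsplit : (L ^ (k + 1)) 1 - X ^ (d * (k + 1)) =
        L ((L ^ k) 1 - X ^ (d * k)) + (L (X ^ (d * k)) - X ^ (d * k + d)) := by
      rw [pow_succ', Module.End.mul_apply, map_sub, Nat.mul_succ]
      abel
    rw [hsplit]
    exact add_mem (apply_mem_degreeLT_of_degree_apply_X_pow_le L hL ih) (hlead k)

theorem natDegree_pow_apply_one [Nontrivial R] (L : Module.End R R[X]) {d : ℕ}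
    (hL : ∀ i : ℕ, (L (X ^ i)).degree ≤ (i + d : ℕ))
    (hlead : ∀ m : ℕ, L (X ^ (d * m)) - X ^ (d * m + d) ∈ degreeLT R (d * m + d)) (k : ℕ) :
    ((L ^ k) 1).natDegree = d * k := by
  have hlower := mem_degreeLT.mp (pow_apply_one_sub_X_pow_mem_degreeLT L hL hlead k)
  rw [← degree_X_pow (R := R)] at hlower
  apply natDegree_eq_of_degree_eq_some
  rw [← add_sub_cancel (X ^ (d * k)) ((L ^ k) 1), degree_add_eq_left_of_degree_lt hlower,
    degree_X_pow]

theorem commutator_apply_X_pow (A B : Module.End R R[X])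
    (hA : ∀ k : ℕ, A (X ^ k) = if Even k then X ^ k else X ^ (k + 1))
    (hB : ∀ k : ℕ, B (X ^ k) = if Even k then X ^ (k + 1) else X ^ k) (n : ℕ) :
    (A * B - B * A) (X ^ n) =
      if Even n then X ^ (n + 2) - X ^ (n + 1) else X ^ (n + 1) - X ^ (n + 2) := by
  by_cases hn : Even n
  · have hn' : ¬ Even (n + 1) := by simpa [Nat.even_add_one] using hn
    simp only [LinearMap.sub_apply, Module.End.mul_apply, hA, hB, if_pos hn, if_neg hn']
  · have hn' : Even (n + 1) := by simpa [Nat.even_add_one] using hn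
    simp only [LinearMap.sub_apply, Module.End.mul_apply, hA, hB, if_neg hn, if_pos hn']

theorem degree_commutator_apply_X_pow_le (A B : Module.End R R[X])
    (hA : ∀ k : ℕ, A (X ^ k) = if Even k then X ^ k else X ^ (k + 1))
    (hB : ∀ k : ℕ, B (X ^ k) = if Even k then X ^ (k + 1) else X ^ k) (n : ℕ) :
    ((A * B - B * A) (X ^ n)).degree ≤ (n + 2 : ℕ) := by
  have hle : ∀ j ≤ n + 2, (X ^ j : R[X]).degree ≤ (n + 2 : ℕ) := fun j hj =>
    (degree_X_pow_le j).trans (by exact_mod_cast hj)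
  rw [commutator_apply_X_pow A B hA hB]
  split_ifs
  all_goals exact (degree_sub_le _ _).trans (max_le (hle _ (by omega)) (hle _ (by omega)))

end Polynomial

theorem stmt_18 (A B : Module.End ℝ (Polynomial ℝ))
    (hA : ∀ k : ℕ, A (X ^ k) = if Even k then X ^ k else X ^ (k + 1))
    (hB : ∀ k : ℕ, B (X ^ k) = if Even k then X ^ (k + 1) else X ^ k) :
    (∀ m : ℕ, (A * B - B * A) (X ^ (2 * m)) = X ^ (2 * m + 2) - X ^ (2 * m + 1)) ∧
    (∀ m : ℕ, (A * B - B * A) (X ^ (2 * m + 1)) = X ^ (2 * m + 2) - X ^ (2 * m + 3)) ∧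
    (∀ k : ℕ, 1 ≤ k → (((A * B - B * A) ^ k) 1).natDegree = 2 * k) ∧
    (¬ ∃ D : ℕ, ∀ k : ℕ, (((A * B - B * A) ^ k) 1).natDegree ≤ D) := by
  have hC := commutator_apply_X_pow A B hA hB
  have heven (m : ℕ) : (A * B - B * A) (X ^ (2 * m)) = X ^ (2 * m + 2) - X ^ (2 * m + 1) := by
    rw [hC, if_pos (even_two_mul m)]
  have hodd (m : ℕ) :
      (A * B - B * A) (X ^ (2 * m + 1)) = X ^ (2 * m + 2) - X ^ (2 * m + 3) := by
    rw [hC, if_neg (Nat.not_even_iff_odd.mpr (odd_two_mul_add_one m))]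
  have hdeg (k : ℕ) : (((A * B - B * A) ^ k) 1).natDegree = 2 * k := by
    refine natDegree_pow_apply_one _ (degree_commutator_apply_X_pow_le A B hA hB) (fun m => ?_) k
    rw [heven, sub_sub_cancel_left, neg_mem_iff, mem_degreeLT]
    exact (degree_X_pow_le _).trans_lt (by exact_mod_cast Nat.lt_succ_self _)
  refine ⟨heven, hodd, fun k _ => hdeg k, ?_⟩
  rintro ⟨D, hD⟩
  have := hD (D + 1)
  rw [hdeg] at this
  omega
end
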